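/- Let m ≥ 2 and n = 2^{m+1} - 4. With P_i ∈ ℤ/2[w2,w3] defined as the sum of monomials w2^p w3^{(2^i+n+1-2p)/3} over p whose m-bit binary expansion is (q, 0,...,0) (i trailing zeros) with q ∈ Δ_{m-i}, the leading term of P_i under the lexicographic order with w2 > w3 is w2^{2^m - 2^i} w3^{2^i - 1}. -/

import Mathlib

/-! Distinct terms of `P_i` have distinct `w2`-degrees `p`, so the leading term is the one with
the largest admissible `p`. An admissible `p` is a multiple of `2^i` below `2^m`, hence at most
`2^m - 2^i`; and `2^m - 2^i` is admissible, since its top `m - i` bits are all ones and such a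
string lies in `Δ_{m-i}` vacuously. Its `w3`-exponent is
`(2^i + n + 1 - 2(2^m - 2^i))/3 = 2^i - 1`. -/

open MvPolynomial

/-- `InDelta k p` : the `k`-bit binary string of `p` lies in `Δ_k`
(convention `p_{-1} = 1`): whenever `p_{l-1} = 1` and `p_l = ⋯ = p_{l+2t} = 0`,
then `p_{l+2t+1} = 0`. -/
def InDelta (k p : ℕ) : Prop :=
  ∀ l t : ℕ, l + 2 * t + 1 ≤ k - 1 →
    (l = 0 ∨ p.testBit (l - 1) = true) →
    (∀ j, l ≤ j → j ≤ l + 2 * t → p.testBit j = false) →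
    p.testBit (l + 2 * t + 1) = false

open scoped Classical in
/-- The polynomial `P_i = Σ w2^p w3^((2^i + n + 1 - 2p)/3)` (with
`n = 2^(m+1) - 4`), summed over all `p < 2^m` whose `m`-bit binary expansion
has `i` trailing zeros followed by a string in `Δ_{m-i}`, and such that
`2^i + n + 1 - 2p` is divisible by `3`.  Here `X 0 = w2`, `X 1 = w3`. -/
noncomputable def Ppoly (m i : ℕ) : MvPolynomial (Fin 2) (ZMod 2) :=
  ∑ p ∈ (Finset.range (2 ^ m)).filter
      (fun p => 2 ^ i ∣ p ∧ InDelta (m - i) (p / 2 ^ i) ∧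
        3 ∣ (2 ^ i + (2 ^ (m + 1) - 4) + 1 - 2 * p)),
    X 0 ^ p * X 1 ^ ((2 ^ i + (2 ^ (m + 1) - 4) + 1 - 2 * p) / 3)

/-- The exponent pair `(deg_{w2}, deg_{w3})` of a monomial, in the
lexicographic order with `w2 > w3`. -/
def expPair (d : Fin 2 →₀ ℕ) : ℕ ×ₗ ℕ := toLex (d 0, d 1)

/-- The leading exponent of a polynomial: the lexicographically largest
exponent pair in its support (and `(0,0)` for the zero polynomial). -/
noncomputable def leadExp (f : MvPolynomial (Fin 2) (ZMod 2)) : ℕ × ℕ :=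
  ofLex (((f.support.image expPair).max).unbotD (toLex (0, 0)))

lemma inDelta_two_pow_sub_one (k : ℕ) : InDelta k (2 ^ k - 1) := by
  intro l t hlt _ hzero
  have hl : l < k := by omega
  simpa [Nat.testBit_two_pow_sub_one, hl] using hzero l le_rfl (by omega)

lemma two_pow_sub_two_pow_div_two_pow {m i : ℕ} (hi : i ≤ m) :
    (2 ^ m - 2 ^ i) / 2 ^ i = 2 ^ (m - i) - 1 := by
  rw [show 2 ^ m - 2 ^ i = 2 ^ i * (2 ^ (m - i) - 1) by
    rw [Nat.mul_sub, mul_one, ← pow_add, Nat.add_sub_cancel' hi]]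
  exact Nat.mul_div_cancel_left _ (by positivity)

lemma le_two_pow_sub_two_pow_of_dvd {m i p : ℕ} (hi : i ≤ m) (hp : p < 2 ^ m)
    (hdvd : 2 ^ i ∣ p) : p ≤ 2 ^ m - 2 ^ i := by
  have : 2 ^ i ≤ 2 ^ m := Nat.pow_le_pow_right two_pos hi
  exact Nat.le_of_lt_add_of_dvd (by omega) hdvd (Nat.dvd_sub (pow_dvd_pow 2 hi) dvd_rfl)

section LeadingExponent

variable {R : Type*} [CommSemiring R] [Nontrivial R]

lemma support_sum_monomial_one {σ : Type*} (t : Finset (σ →₀ ℕ)) :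
    (∑ e ∈ t, monomial e (1 : R)).support = t := by
  classical
  ext e
  simp [mem_support_iff, coeff_sum, coeff_monomial]

lemma support_sum_X_pow_mul_X_pow (s : Finset ℕ) (g : ℕ → ℕ) :
    (∑ p ∈ s, X 0 ^ p * X 1 ^ g p : MvPolynomial (Fin 2) R).support =
      s.image fun p => Finsupp.single 0 p + Finsupp.single 1 (g p) := by
  classical
  have hinj : Function.Injective fun p => Finsupp.single (0 : Fin 2) p + Finsupp.single 1 (g p) :=
    fun p q h => by simpa using DFunLike.congr_fun h 0
  simp_rw [X_pow_eq_monomial, monomial_mul, one_mul]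
  rw [← Finset.sum_image (f := fun e => monomial e (1 : R)) hinj.injOn,
    support_sum_monomial_one]

end LeadingExponent

lemma leadExp_sum_X_pow_mul_X_pow {s : Finset ℕ} {p₀ : ℕ} (g : ℕ → ℕ)
    (hp₀ : IsGreatest (s : Set ℕ) p₀) :
    leadExp (∑ p ∈ s, X 0 ^ p * X 1 ^ g p) = (p₀, g p₀) := by
  classical
  have hmono : Monotone fun p => toLex (p, g p) := fun p q hpq => by
    rcases hpq.lt_or_eq with hpq | rfl
    · exact (Prod.Lex.toLex_lt_toLex.mpr (Or.inl hpq)).le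
    · rfl
  have hmax : (s.image fun p => toLex (p, g p)).max = toLex (p₀, g p₀) :=
    le_antisymm (Finset.max_le (by simpa using fun p hp => hmono (hp₀.2 hp)))
      (Finset.le_max (Finset.mem_image_of_mem _ hp₀.1))
  have hexp : (expPair ∘ fun p => Finsupp.single 0 p + Finsupp.single 1 (g p)) =
      fun p => toLex (p, g p) := by
    funext p
    simp [expPair]
  rw [leadExp, support_sum_X_pow_mul_X_pow, Finset.image_image, hexp, hmax]
  rfl

/-- For `m ≥ 2` and `i ≤ m`, the leading term of `P_i` (lexicographic order
with `w2 > w3`) is the monomial `w2^(2^m - 2^i) * w3^(2^i - 1)`: this monomial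
occurs in `P_i` and its exponent pair is the leading exponent. -/
theorem leadTerm_Ppoly (m : ℕ) (hm : 2 ≤ m) (i : ℕ) (hi : i ≤ m) :
    (Finsupp.single (0 : Fin 2) (2 ^ m - 2 ^ i) +
        Finsupp.single (1 : Fin 2) (2 ^ i - 1)) ∈ (Ppoly m i).support ∧
      leadExp (Ppoly m i) = (2 ^ m - 2 ^ i, 2 ^ i - 1) := by
  classical
  have hw3 : 2 ^ i + (2 ^ (m + 1) - 4) + 1 - 2 * (2 ^ m - 2 ^ i) = 3 * (2 ^ i - 1) := by
    have : 2 ^ i ≤ 2 ^ m := Nat.pow_le_pow_right two_pos hi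
    have : 2 ^ 2 ≤ 2 ^ m := Nat.pow_le_pow_right two_pos hm
    have : 1 ≤ 2 ^ i := Nat.one_le_two_pow
    rw [pow_succ]
    omega
  set g : ℕ → ℕ := fun p => (2 ^ i + (2 ^ (m + 1) - 4) + 1 - 2 * p) / 3
  have hg : g (2 ^ m - 2 ^ i) = 2 ^ i - 1 := by simp [g, hw3]
  set S := (Finset.range (2 ^ m)).filter fun p => 2 ^ i ∣ p ∧ InDelta (m - i) (p / 2 ^ i) ∧
    3 ∣ (2 ^ i + (2 ^ (m + 1) - 4) + 1 - 2 * p)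
  have hS : IsGreatest (S : Set ℕ) (2 ^ m - 2 ^ i) := by
    simp only [IsGreatest, upperBounds, S, Finset.coe_filter, Finset.mem_range, Set.mem_ofPred_eq]
    refine ⟨⟨Nat.sub_lt (by positivity) (by positivity),
      Nat.dvd_sub (pow_dvd_pow 2 hi) dvd_rfl, ?_, ?_⟩, ?_⟩
    · exact two_pow_sub_two_pow_div_two_pow hi ▸ inDelta_two_pow_sub_one _
    · exact hw3 ▸ dvd_mul_right 3 _
    · exact fun p ⟨hp, hdvd, _⟩ => le_two_pow_sub_two_pow_of_dvd hi hp hdvd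
  have hP : Ppoly m i = ∑ p ∈ S, X 0 ^ p * X 1 ^ g p := rfl
  rw [hP, support_sum_X_pow_mul_X_pow, leadExp_sum_X_pow_mul_X_pow g hS, ← hg]
  exact ⟨Finset.mem_image_of_mem _ hS.1, rfl⟩
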